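/- arXiv:2403.16046 — 6 statements merged into one kernel-verified Lean document; each statement's English description precedes it below -/
import Mathlib

section
/- Let k_h > 0 and ω_h ≥ 0 with ω_h ≤ 2k_h. If real numbers x, e satisfy x² + (2ω_h - k_h)·x·e + (ω_h² - k_h·ω_h)·e² ≤ 0 (the HIGS integrator-mode sector constraint), then 2·x·e ≤ (2k_h - ω_h)·e². -/
theorem stmt_1 (k_h ω_h x e : ℝ) (hk : 0 < k_h) (hω : 0 ≤ ω_h) (hωk : ω_h ≤ 2 * k_h)
    (hsec : x ^ 2 + (2 * ω_h - k_h) * x * e + (ω_h ^ 2 - k_h * ω_h) * e ^ 2 ≤ 0) :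
    2 * x * e ≤ (2 * k_h - ω_h) * e ^ 2 := by
  nlinarith [sq_nonneg (x + ω_h * e - k_h * e), sq_nonneg e, mul_nonneg hω (sq_nonneg e), hk.le]
end

section
/- The discrete-time HIGS with parameters k_h > 0 and 0 ≤ ω_h ≤ 2k_h, defined by x⁺ = x + ω_h·e if (x,e) ∈ F and x⁺ = k_h·e otherwise, where F = {(x,e) : (x + ω_h e)e ≥ (1/k_h)(x + ω_h e)²}, satisfies V(x⁺) - V(x) ≤ e·(x⁺ - x) for all real x, e, where V(x) = x²/(2k_h). -/
theorem stmt_3 (k_h ω_h : ℝ) (hk : 0 < k_h) (hω : 0 ≤ ω_h) (hωk : ω_h ≤ 2 * k_h)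
    (x e : ℝ) :
    let x' := if (x + ω_h * e) * e ≥ (1 / k_h) * (x + ω_h * e) ^ 2 then x + ω_h * e else k_h * e
    x' ^ 2 / (2 * k_h) - x ^ 2 / (2 * k_h) ≤ e * (x' - x) := by
  intro x'
  unfold x'
  split_ifs with h
  · rw [ge_iff_le, div_mul_eq_mul_div, div_le_iff₀ hk] at h
    rw [div_sub_div_same, div_le_iff₀ (by linarith)]
    have hue : (x + ω_h * e) * e ≤ k_h * e ^ 2 := by
      nlinarith [sq_nonneg (x + ω_h * e - k_h * e)]
    nlinarith [mul_nonneg hω (sub_nonneg.2 hue), mul_nonneg (mul_nonneg hω hω) (sq_nonneg e)]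
  · rw [div_sub_div_same, div_le_iff₀ (by linarith)]
    nlinarith [sq_nonneg (k_h * e - x)]
end

section
/- Let ω_h > 0 and k_h > 0. There do not exist real numbers x, e with e ≠ 0 such that simultaneously (i) the losslessness equality (1/(2k_h))(x + ω_h e)² - (1/(2k_h))x² = e·((x + ω_h e) - x) holds, and (ii) the sector constraint (x + ω_h e)e ≥ (1/k_h)(x + ω_h e)² holds. -/
theorem stmt_4 (ω_h k_h : ℝ) (hω : 0 < ω_h) (hk : 0 < k_h) :
    ¬ ∃ (x e : ℝ), e ≠ 0 ∧
      (1 / (2 * k_h)) * (x + ω_h * e) ^ 2 - (1 / (2 * k_h)) * x ^ 2 = e * ((x + ω_h * e) - x) ∧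
      (x + ω_h * e) * e ≥ (1 / k_h) * (x + ω_h * e) ^ 2 := by
  rintro ⟨x, e, he, h1, h2⟩
  have hk' : k_h ≠ 0 := ne_of_gt hk
  field_simp at h1 h2
  have hx : x = (k_h - ω_h / 2) * e := by
    have h : (x - (k_h - ω_h / 2) * e) * (2 * ω_h * e) = 0 := by ring_nf; nlinarith [h1]
    rcases mul_eq_zero.1 h with h' | h'
    · linarith [sub_eq_zero.1 h']
    · exact absurd h' (by positivity)
  subst hx
  have he2 : 0 < e ^ 2 := by positivity
  nlinarith [mul_pos (mul_pos hω hk) he2, mul_pos hω he2, sq_nonneg e]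
end

section
/- Let A ∈ ℝ^{n×n} with det(I-A) ≠ 0, B ∈ ℝ^{n×1}, P symmetric positive definite with C = Bᵀ(I-A)⁻ᵀP, and let k_h > 0 satisfy k_h·C(I-A)⁻¹B < 1. Then the quadratic function W(x, z) = ½xᵀPx + z²/(2k_h) - (Cx)·z on ℝⁿ × ℝ is positive definite, i.e., W(x,z) > 0 for all (x,z) ≠ (0,0) and W(0,0) = 0. -/
open Matrix

theorem stmt_10 {n : ℕ} (A : Matrix (Fin n) (Fin n) ℝ) (B : Matrix (Fin n) (Fin 1) ℝ)
    (P : Matrix (Fin n) (Fin n) ℝ) (hA : (1 - A).det ≠ 0) (hP : P.PosDef)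
    (C : Matrix (Fin 1) (Fin n) ℝ) (hC : C = Bᵀ * ((1 - A)⁻¹)ᵀ * P)
    (k_h : ℝ) (hk : 0 < k_h) (hgain : k_h * (C * (1 - A)⁻¹ * B) 0 0 < 1) :
    let W : (Fin n → ℝ) → ℝ → ℝ :=
      fun x z => (1 / 2) * (x ⬝ᵥ (P *ᵥ x)) + z ^ 2 / (2 * k_h) - ((C *ᵥ x) 0) * z
    (∀ (x : Fin n → ℝ) (z : ℝ), (x, z) ≠ (0, 0) → 0 < W x z) ∧ W 0 0 = 0 := by
  intro W
  have hPsym : Pᵀ = P := hP.1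
  have hCT : Cᵀ = P * (1 - A)⁻¹ * B := by
    rw [hC, transpose_mul, transpose_mul, transpose_transpose, transpose_transpose, hPsym,
      Matrix.mul_assoc]
  set b : Fin n → ℝ := fun i => B i 0 with hb
  set u : Fin n → ℝ := (1 - A)⁻¹ *ᵥ b with hu
  set w : Fin n → ℝ := P *ᵥ u with hw
  have key : ∀ (M : Matrix (Fin n) (Fin n) ℝ) (j : Fin n), (M *ᵥ b) j = (M * B) j 0 := by
    intro M j; simp [mulVec, dotProduct, mul_apply, hb]
  have hwj : ∀ j, w j = Cᵀ j 0 := by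
    intro j
    rw [hCT, hw, hu, mulVec_mulVec, key]
  have hCx : ∀ x : Fin n → ℝ, (C *ᵥ x) 0 = w ⬝ᵥ x := by
    intro x
    simp only [mulVec, dotProduct]
    exact Finset.sum_congr rfl fun j _ => by rw [hwj j, transpose_apply]
  -- gain
  set g : ℝ := (C * (1 - A)⁻¹ * B) 0 0 with hg
  have hgu : g = w ⬝ᵥ u := by
    have : (C * (1 - A)⁻¹ * B) 0 0 = ((C * (1 - A)⁻¹) *ᵥ b) 0 := by
      simp [mulVec, dotProduct, mul_apply, hb]
    rw [hg, this, ← mulVec_mulVec, ← hu, hCx]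
  -- symmetry of the form
  have hsymm : ∀ v x : Fin n → ℝ, v ⬝ᵥ (P *ᵥ x) = x ⬝ᵥ (P *ᵥ v) := by
    intro v x
    rw [dotProduct_mulVec, ← mulVec_transpose, hPsym, dotProduct_comm]
  -- completing the square
  have hsq : ∀ (x : Fin n → ℝ) (z : ℝ),
      W x z = (1/2) * ((x - z • u) ⬝ᵥ (P *ᵥ (x - z • u))) + z ^ 2 * (1 - k_h * g) / (2 * k_h) := by
    intro x z
    have e1 : P *ᵥ (x - z • u) = P *ᵥ x - z • w := by
      rw [mulVec_sub, mulVec_smul, hw]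
    have e2 : (x - z • u) ⬝ᵥ (P *ᵥ x - z • w)
        = x ⬝ᵥ (P *ᵥ x) - z * (u ⬝ᵥ (P *ᵥ x)) - z * (x ⬝ᵥ w) + z^2 * (u ⬝ᵥ w) := by
      simp only [sub_dotProduct, dotProduct_sub, smul_dotProduct, dotProduct_smul, smul_eq_mul]
      ring
    have e3 : u ⬝ᵥ (P *ᵥ x) = w ⬝ᵥ x := by rw [hsymm, hw, dotProduct_comm]
    have e4 : x ⬝ᵥ w = w ⬝ᵥ x := dotProduct_comm _ _
    have e5 : u ⬝ᵥ w = g := by rw [hgu, dotProduct_comm]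
    show (1 / 2) * (x ⬝ᵥ (P *ᵥ x)) + z ^ 2 / (2 * k_h) - ((C *ᵥ x) 0) * z = _
    rw [hCx, e1, e2, e3, e4, e5]
    field_simp
    ring
  have hgainpos : 0 < (1 - k_h * g) / (2 * k_h) := by
    apply div_pos (by linarith [hgain]) (by linarith)
  have hpsd := hP.posSemidef
  constructor
  · intro x z hxz
    rw [hsq]
    rcases eq_or_ne z 0 with hz | hz
    · subst hz
      have hx : x ≠ 0 := by
        intro h; exact hxz (by simp [h])
      have := hP.dotProduct_mulVec_pos hx
      simp only [star_trivial] at this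
      have hpos : 0 < x ⬝ᵥ (P *ᵥ x) := by simpa using this
      simp only [zero_smul, sub_zero]
      have : (0:ℝ)^2 * (1 - k_h * g) / (2 * k_h) = 0 := by ring
      rw [this]
      linarith
    · have h1 : 0 ≤ (x - z • u) ⬝ᵥ (P *ᵥ (x - z • u)) := by
        have := hpsd.dotProduct_mulVec_nonneg (x - z • u)
        simpa using this
      have h2 : 0 < z ^ 2 * (1 - k_h * g) / (2 * k_h) := by
        rw [mul_div_assoc]
        exact mul_pos (by positivity) hgainpos
      linarith
  · show (1 / 2) * ((0:Fin n → ℝ) ⬝ᵥ (P *ᵥ 0)) + (0:ℝ) ^ 2 / (2 * k_h) - ((C *ᵥ 0) 0) * 0 = 0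
    simp
end

section
/- Consider sequences (x_k) in ℝⁿ and (z_k), (e_k), (u_k), (y_k) in ℝ with e_k = y_k and u_k = z_{k+1}, and suppose V(x_{k+1}) - V(x_k) ≤ u_k(y_{k+1} - y_k) and Ṽ(z_{k+1}) - Ṽ(z_k) ≤ e_k(z_{k+1} - z_k) for all k, for some functions V : ℝⁿ → ℝ and Ṽ : ℝ → ℝ. Then the function W_k = V(x_k) + Ṽ(z_k) - y_k·z_k satisfies W_{k+1} - W_k ≤ 0 for all k. -/
theorem stmt_11 {n : ℕ} (x : ℕ → (Fin n → ℝ)) (z e u y : ℕ → ℝ)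
    (V : (Fin n → ℝ) → ℝ) (Vt : ℝ → ℝ)
    (hinter1 : ∀ k, e k = y k) (hinter2 : ∀ k, u k = z (k + 1))
    (hNI : ∀ k, V (x (k + 1)) - V (x k) ≤ u k * (y (k + 1) - y k))
    (hSANI : ∀ k, Vt (z (k + 1)) - Vt (z k) ≤ e k * (z (k + 1) - z k)) :
    let W : ℕ → ℝ := fun k => V (x k) + Vt (z k) - y k * z k
    ∀ k, W (k + 1) - W k ≤ 0 := by
  intro W k
  have h1 := hNI k
  have h2 := hSANI k
  rw [hinter1 k] at h2
  rw [hinter2 k] at h1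
  simp only [W]
  nlinarith [h1, h2]
end

section
/- Let A ∈ ℝ^{n×n}, B ∈ ℝ^{n×1}, P ∈ ℝ^{n×n} symmetric positive definite with det(I-A) ≠ 0, C = Bᵀ(I-A)⁻ᵀP, and AᵀPA - P ≤ 0 (negative semidefinite). Then the system x_{k+1} = Ax_k + Bu_k, y_k = Cx_k satisfies the discrete-time NI dissipation inequality V(x_{k+1}) - V(x_k) ≤ u_k·(y_{k+1} - y_k) for all x_k ∈ ℝⁿ and u_k ∈ ℝ, where V(x) = ½xᵀPx. -/
open Matrix

private lemma dp_trans {n : ℕ} (M : Matrix (Fin n) (Fin n) ℝ)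
    (a b : Fin n → ℝ) : a ⬝ᵥ (Mᵀ *ᵥ b) = (M *ᵥ a) ⬝ᵥ b := by
  rw [Matrix.dotProduct_mulVec, Matrix.vecMul_transpose]

private lemma dp_symm {n : ℕ} (P : Matrix (Fin n) (Fin n) ℝ) (hP : Pᵀ = P)
    (a b : Fin n → ℝ) : a ⬝ᵥ (P *ᵥ b) = b ⬝ᵥ (P *ᵥ a) := by
  rw [← hP, dp_trans, dotProduct_comm, hP]

theorem stmt_18 {n : ℕ} (A : Matrix (Fin n) (Fin n) ℝ) (B : Matrix (Fin n) (Fin 1) ℝ)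
    (P : Matrix (Fin n) (Fin n) ℝ) (hP : P.PosDef) (hA : (1 - A).det ≠ 0)
    (C : Matrix (Fin 1) (Fin n) ℝ) (hC : C = Bᵀ * ((1 - A)⁻¹)ᵀ * P)
    (hLMI : (P - Aᵀ * P * A).PosSemidef) :
    ∀ (x : Fin n → ℝ) (u : ℝ),
      let x' := A *ᵥ x + B *ᵥ (fun _ => u)
      (1 / 2) * (x' ⬝ᵥ (P *ᵥ x')) - (1 / 2) * (x ⬝ᵥ (P *ᵥ x)) ≤
        u * ((C *ᵥ x') 0 - (C *ᵥ x) 0) := by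
  intro x u x'
  have hPs : Pᵀ = P := hP.1
  set b : Fin n → ℝ := B *ᵥ (fun _ => u) with hb
  set v : Fin n → ℝ := (1 - A)⁻¹ *ᵥ b with hvdef
  have hInv : (1 - A) * (1 - A)⁻¹ = 1 := Matrix.mul_nonsing_inv _ (isUnit_iff_ne_zero.mpr hA)
  have hv : (1 - A) *ᵥ v = b := by
    rw [hvdef, Matrix.mulVec_mulVec, hInv, Matrix.one_mulVec]
  set z : Fin n → ℝ := x - v with hz
  have hx : x = z + v := by simp [hz]
  have hbv : b = v - A *ᵥ v := by
    rw [← hv, Matrix.sub_mulVec, Matrix.one_mulVec]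
  have hx' : x' = A *ᵥ z + v := by
    have hb2 : A *ᵥ v + b = v := by rw [hbv]; abel
    calc x' = A *ᵥ (z + v) + b := by rw [← hx]
      _ = A *ᵥ z + (A *ᵥ v + b) := by rw [Matrix.mulVec_add]; abel
      _ = A *ᵥ z + v := by rw [hb2]
  -- output term: u * (C *ᵥ w) 0 = v ⬝ᵥ (P *ᵥ w)
  have hout : ∀ w : Fin n → ℝ, u * (C *ᵥ w) 0 = v ⬝ᵥ (P *ᵥ w) := by
    intro w
    have h1 : u * (C *ᵥ w) 0 = (fun _ : Fin 1 => u) ⬝ᵥ (C *ᵥ w) := by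
      simp [dotProduct]
    rw [h1, Matrix.dotProduct_mulVec, hC, ← Matrix.vecMul_vecMul, ← Matrix.vecMul_vecMul,
      Matrix.vecMul_transpose, Matrix.vecMul_transpose, ← hb, ← hvdef,
      ← Matrix.mulVec_transpose, hPs, ← dp_symm P hPs, Matrix.dotProduct_mulVec]
    rw [dotProduct_comm, Matrix.dotProduct_mulVec]
  have hpsd : 0 ≤ z ⬝ᵥ ((P - Aᵀ * P * A) *ᵥ z) := by
    have := hLMI.dotProduct_mulVec_nonneg z
    simpa using this
  have hAPA : z ⬝ᵥ ((Aᵀ * P * A) *ᵥ z) = (A *ᵥ z) ⬝ᵥ (P *ᵥ (A *ᵥ z)) := by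
    rw [Matrix.mul_assoc, ← Matrix.mulVec_mulVec, dp_trans, Matrix.mulVec_mulVec]
  have hkey : (A *ᵥ z) ⬝ᵥ (P *ᵥ (A *ᵥ z)) - z ⬝ᵥ (P *ᵥ z) ≤ 0 := by
    have h2 : z ⬝ᵥ ((P - Aᵀ * P * A) *ᵥ z)
        = z ⬝ᵥ (P *ᵥ z) - (A *ᵥ z) ⬝ᵥ (P *ᵥ (A *ᵥ z)) := by
      rw [Matrix.sub_mulVec, dotProduct_sub, hAPA]
    linarith [hpsd, h2 ▸ hpsd]
  rw [mul_sub, hout, hout, hx, hx']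
  have e1 : (A *ᵥ z + v) ⬝ᵥ (P *ᵥ (A *ᵥ z + v))
      = (A *ᵥ z) ⬝ᵥ (P *ᵥ (A *ᵥ z)) + 2 * (v ⬝ᵥ (P *ᵥ (A *ᵥ z))) + v ⬝ᵥ (P *ᵥ v) := by
    rw [Matrix.mulVec_add, dotProduct_add, add_dotProduct, add_dotProduct,
      dp_symm P hPs (A *ᵥ z) v]
    ring
  have e2 : (z + v) ⬝ᵥ (P *ᵥ (z + v))
      = z ⬝ᵥ (P *ᵥ z) + 2 * (v ⬝ᵥ (P *ᵥ z)) + v ⬝ᵥ (P *ᵥ v) := by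
    rw [Matrix.mulVec_add, dotProduct_add, add_dotProduct, add_dotProduct,
      dp_symm P hPs z v]
    ring
  have e3 : v ⬝ᵥ (P *ᵥ (A *ᵥ z + v)) = v ⬝ᵥ (P *ᵥ (A *ᵥ z)) + v ⬝ᵥ (P *ᵥ v) := by
    rw [Matrix.mulVec_add, dotProduct_add]
  have e4 : v ⬝ᵥ (P *ᵥ (z + v)) = v ⬝ᵥ (P *ᵥ z) + v ⬝ᵥ (P *ᵥ v) := by
    rw [Matrix.mulVec_add, dotProduct_add]
  rw [e1, e2, e3, e4]
  linarith [hkey]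
end
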